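/- There exists a unique solution (x_1, …, x_N) of the MIW recursion that satisfies x_1 + ⋯ + x_N = 0 and is strictly decreasing (x_1 > x_2 > ⋯ > x_N); moreover, this solution is zero-median. -/

import Mathlib

noncomputable section

/-- Partial sums `S_n = x_1 + ⋯ + x_n`. -/
def Ssum (x : ℕ → ℝ) (n : ℕ) : ℝ := ∑ i ∈ Finset.Icc 1 n, x i

/-- `x` is a solution of the MIW recursion
`x_{n+1} = x_n - 1/(x_1 + ⋯ + x_n)` for `1 ≤ n ≤ N - 1`. -/
def IsMIW (N : ℕ) (x : ℕ → ℝ) : Prop :=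
  ∀ n, 1 ≤ n → n ≤ N - 1 → Ssum x n ≠ 0 ∧ x (n + 1) = x n - 1 / Ssum x n

/-- Zero-median: `x_m = 0` if `N` is odd and `x_m = -x_{m+1}` if `N` is even,
where `m = (N+1)/2` if `N` is odd and `m = N/2` if `N` is even. -/
def ZeroMedian (N : ℕ) (x : ℕ → ℝ) : Prop :=
  if N % 2 = 1 then x ((N + 1) / 2) = 0 else x (N / 2) = -x (N / 2 + 1)

/-!
Writing `S_n = x_1 + ⋯ + x_n` (so `S_0 = 0`), the recursion becomes the reversible second-order
recurrence `S_{n+2} = 2 S_{n+1} - S_n - 1 / S_{n+1}`, and a solution is strictly decreasing exactly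
when `S_1, …, S_{N-1}` are positive. We shoot in `a = S_1`. While the orbit stays positive, the gap
between the orbits of `a < b` is increasing, so at most one `a` keeps `S_1, …, S_{N-1}` positive and
reaches `S_N = 0`. For existence, take the infimum of the (open, nonempty) set of initial
values whose orbit is positive at `1, …, N`. On that set `S_{k+1} > 0` forces `1 / S_k < 2 S_k`,
i.e. `2 S_k² > 1`, for `k < N`; this bound passes to the infimum, so there `S_1, …, S_{N-1}`
stay positive, while `S_N = 0` because the set is open. Uniqueness applied to the reflected orbit
`S_{N-n}` gives `S_{N-n} = S_n`, which is the zero-median property.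
-/

open Filter Topology

/-- The partial sums `S_n` of the MIW solution with `x_1 = a`. -/
def miwSum (a : ℝ) : ℕ → ℝ
  | 0 => 0
  | 1 => a
  | n + 2 => 2 * miwSum a (n + 1) - miwSum a n - 1 / miwSum a (n + 1)

def IsMIWPartialSums (N : ℕ) (S : ℕ → ℝ) : Prop :=
  S 0 = 0 ∧ ∀ n, n + 2 ≤ N → S (n + 2) = 2 * S (n + 1) - S n - 1 / S (n + 1)

def HitsZeroAt (N : ℕ) (a : ℝ) : Prop :=
  (∀ k, 1 ≤ k → k < N → 0 < miwSum a k) ∧ miwSum a N = 0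

theorem isMIWPartialSums_miwSum (N : ℕ) (a : ℝ) : IsMIWPartialSums N (miwSum a) :=
  ⟨rfl, fun _ _ => rfl⟩

namespace IsMIWPartialSums

variable {N : ℕ} {S : ℕ → ℝ}

theorem eq_miwSum (h : IsMIWPartialSums N S) : ∀ n ≤ N, S n = miwSum (S 1) n := by
  have pair : ∀ n, n + 1 ≤ N → S n = miwSum (S 1) n ∧ S (n + 1) = miwSum (S 1) (n + 1) := by
    intro n
    induction n with
    | zero => exact fun _ => ⟨h.1, rfl⟩
    | succ n ih =>
      intro hn
      obtain ⟨h0, h1⟩ := ih (by omega)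
      refine ⟨h1, ?_⟩
      rw [h.2 n hn, h0, h1, miwSum]
  intro n hn
  cases n with
  | zero => exact h.1
  | succ n => exact (pair n hn).2

theorem reflect (h : IsMIWPartialSums N S) (hN : S N = 0) :
    IsMIWPartialSums N fun n => S (N - n) := by
  refine ⟨by simpa using hN, fun n hn => ?_⟩
  obtain ⟨m, rfl⟩ : ∃ m, N = n + 2 + m := ⟨N - (n + 2), by omega⟩
  have hrec := h.2 m (by omega)
  simp only [show n + 2 + m - (n + 2) = m by omega, show n + 2 + m - (n + 1) = m + 1 by omega,
    show n + 2 + m - n = m + 2 by omega]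
  linarith

end IsMIWPartialSums

theorem Ssum_succ (x : ℕ → ℝ) (n : ℕ) : Ssum x (n + 1) = Ssum x n + x (n + 1) :=
  Finset.sum_Icc_succ_top (by omega) x

theorem Ssum_sub_pred {S : ℕ → ℝ} (h0 : S 0 = 0) (n : ℕ) :
    Ssum (fun k => S k - S (k - 1)) n = S n := by
  induction n with
  | zero => simp [Ssum, h0]
  | succ n ih => rw [Ssum_succ, ih, Nat.add_sub_cancel]; ring

theorem Ssum_sub_Ssum_pred (x : ℕ → ℝ) {n : ℕ} (hn : 1 ≤ n) :
    Ssum x n - Ssum x (n - 1) = x n := by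
  obtain ⟨m, rfl⟩ : ∃ m, n = m + 1 := ⟨n - 1, by omega⟩
  rw [Ssum_succ, Nat.add_sub_cancel]; ring

theorem IsMIW.isMIWPartialSums {N : ℕ} {y : ℕ → ℝ} (hy : IsMIW N y) :
    IsMIWPartialSums N (Ssum y) := by
  refine ⟨by simp [Ssum], fun n hn => ?_⟩
  rw [Ssum_succ, (hy (n + 1) (by omega) (by omega)).2,
    ← Ssum_sub_Ssum_pred y (by omega : 1 ≤ n + 1)]
  simp only [Nat.add_sub_cancel]
  ring

theorem IsMIW.Ssum_eq_miwSum {N : ℕ} {y : ℕ → ℝ} (hy : IsMIW N y) {n : ℕ} (hn : n ≤ N) :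
    Ssum y n = miwSum (y 1) n := by
  rw [hy.isMIWPartialSums.eq_miwSum n hn]
  simp [Ssum]

theorem IsMIW.lt_iff {N : ℕ} {y : ℕ → ℝ} (hy : IsMIW N y) {n : ℕ} (h1 : 1 ≤ n) (hn : n < N) :
    y (n + 1) < y n ↔ 0 < Ssum y n := by
  rw [(hy n h1 (by omega)).2, sub_lt_self_iff, one_div_pos]

theorem IsMIWPartialSums.isMIW {N : ℕ} {S : ℕ → ℝ} (h : IsMIWPartialSums N S)
    (hS : ∀ k, 1 ≤ k → k < N → S k ≠ 0) : IsMIW N fun k => S k - S (k - 1) := by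
  intro n h1 hn
  rw [Ssum_sub_pred h.1]
  refine ⟨hS n h1 (by omega), ?_⟩
  obtain ⟨m, rfl⟩ : ∃ m, n = m + 1 := ⟨n - 1, by omega⟩
  simp only [Nat.add_sub_cancel, h.2 m (by omega)]
  ring

theorem continuousAt_miwSum {c : ℝ} :
    ∀ n, (∀ k, 1 ≤ k → k < n → miwSum c k ≠ 0) → ContinuousAt (fun a => miwSum a n) c
  | 0, _ => continuousAt_const
  | 1, _ => continuousAt_id
  | n + 2, h => by
    have h1 := continuousAt_miwSum (n + 1) fun k hk hkn => h k hk (by omega)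
    have h0 := continuousAt_miwSum n fun k hk hkn => h k hk (by omega)
    exact ((continuousAt_const.mul h1).sub h0).sub
      (continuousAt_const.div h1 (h (n + 1) (by omega) (by omega)))

theorem one_le_miwSum {a : ℝ} :
    ∀ k : ℕ, (k : ℝ) + 1 ≤ a → 1 ≤ miwSum a (k + 1) ∧ a - k ≤ miwSum a (k + 1) - miwSum a k
  | 0, ha => by simpa [miwSum] using ha
  | k + 1, ha => by
    push_cast at ha
    obtain ⟨h1, h2⟩ := one_le_miwSum k (by linarith)
    have hinv : 1 / miwSum a (k + 1) ≤ 1 := (div_le_one (by linarith)).2 h1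
    have hstep : miwSum a (k + 2) - miwSum a (k + 1) =
        miwSum a (k + 1) - miwSum a k - 1 / miwSum a (k + 1) := by rw [miwSum]; ring
    push_cast
    constructor <;> linarith

theorem one_lt_two_mul_miwSum_sq {a : ℝ} {n : ℕ} (h0 : 0 ≤ miwSum a n)
    (h1 : 0 < miwSum a (n + 1)) (h2 : 0 < miwSum a (n + 2)) : 1 < 2 * miwSum a (n + 1) ^ 2 := by
  rw [miwSum] at h2
  have : 1 / miwSum a (n + 1) < 2 * miwSum a (n + 1) := by linarith
  rw [div_lt_iff₀ h1] at this
  linarith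

theorem miwSum_sub_miwSum_lt_succ {a b : ℝ} (hab : a < b) :
    ∀ n, (∀ k, 1 ≤ k → k ≤ n → 0 < miwSum a k) →
      0 ≤ miwSum b n - miwSum a n ∧
        miwSum b n - miwSum a n < miwSum b (n + 1) - miwSum a (n + 1)
  | 0, _ => by simpa [miwSum] using hab
  | n + 1, h => by
    obtain ⟨h0, h1⟩ := miwSum_sub_miwSum_lt_succ hab n fun k hk hkn => h k hk (by omega)
    have ha := h (n + 1) (by omega) le_rfl
    have hinv : 1 / miwSum b (n + 1) < 1 / miwSum a (n + 1) :=
      one_div_lt_one_div_of_lt ha (by linarith)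
    refine ⟨by linarith, ?_⟩
    rw [miwSum, miwSum]
    linarith

theorem miwSum_lt_miwSum {a b : ℝ} (hab : a < b) {n : ℕ}
    (h : ∀ k, 1 ≤ k → k ≤ n → 0 < miwSum a k) : miwSum a (n + 1) < miwSum b (n + 1) := by
  obtain ⟨h0, h1⟩ := miwSum_sub_miwSum_lt_succ hab n h
  linarith

namespace HitsZeroAt

variable {N : ℕ} {a b : ℝ}

theorem le (ha : HitsZeroAt N a) (hb : HitsZeroAt N b) (hN : 1 ≤ N) : a ≤ b := by
  by_contra! hba
  have := miwSum_lt_miwSum hba (n := N - 1) fun k hk hkN => hb.1 k hk (by omega)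
  rw [Nat.sub_add_cancel hN, ha.2, hb.2] at this
  exact lt_irrefl 0 this

theorem unique (ha : HitsZeroAt N a) (hb : HitsZeroAt N b) (hN : 1 ≤ N) : a = b :=
  le_antisymm (ha.le hb hN) (hb.le ha hN)

/-- Time reversal maps the orbit of `a` to an orbit hitting zero at `N`, hence to itself. -/
theorem miwSum_sub (ha : HitsZeroAt N a) (hN : 1 ≤ N) {n : ℕ} (hn : n ≤ N) :
    miwSum a (N - n) = miwSum a n := by
  have hrefl := (isMIWPartialSums_miwSum N a).reflect ha.2
  have ht : HitsZeroAt N (miwSum a (N - 1)) := by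
    refine ⟨fun k hk hkN => ?_, ?_⟩
    · rw [← hrefl.eq_miwSum k hkN.le]
      exact ha.1 (N - k) (by omega) (by omega)
    · rw [← hrefl.eq_miwSum N le_rfl, Nat.sub_self]
      rfl
  rw [hrefl.eq_miwSum n hn, ht.unique ha hN]

end HitsZeroAt

def miwPosSet (N : ℕ) : Set ℝ := {a | ∀ k ∈ Finset.Icc 1 N, 0 < miwSum a k}

theorem miwPosSet_nonempty (N : ℕ) : (miwPosSet N).Nonempty := by
  refine ⟨N, fun k hk => ?_⟩
  rw [Finset.mem_Icc] at hk
  obtain ⟨j, rfl⟩ : ∃ j, k = j + 1 := ⟨k - 1, by omega⟩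
  have : (j : ℝ) + 1 ≤ N := by exact_mod_cast hk.2
  linarith [(one_le_miwSum j this).1]

theorem bddBelow_miwPosSet {N : ℕ} (hN : 1 ≤ N) : BddBelow (miwPosSet N) :=
  ⟨0, fun a ha => (ha 1 (by simp [hN])).le⟩

theorem sInf_miwPosSet_notMem {N : ℕ} (hN : 1 ≤ N) : sInf (miwPosSet N) ∉ miwPosSet N := by
  intro hs
  have hev : ∀ᶠ a in 𝓝 (sInf (miwPosSet N)), a ∈ miwPosSet N := by
    refine (eventually_all_finset _).2 fun k hk => ?_
    have hcont := continuousAt_miwSum k fun j hj hjk =>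
      (hs j (Finset.mem_Icc.2 ⟨hj, by simp at hk; omega⟩)).ne'
    exact hcont.eventually (lt_mem_nhds (hs k hk))
  obtain ⟨b, hb, hbG⟩ := hev.exists_lt
  exact (csInf_le (bddBelow_miwPosSet hN) hbG).not_gt hb

theorem one_lt_two_mul_miwSum_sq_of_mem {N : ℕ} {a : ℝ} (ha : a ∈ miwPosSet N) {k : ℕ}
    (hk : 1 ≤ k) (hkN : k < N) : 1 < 2 * miwSum a k ^ 2 := by
  obtain ⟨n, rfl⟩ : ∃ n, k = n + 1 := ⟨k - 1, by omega⟩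
  refine one_lt_two_mul_miwSum_sq ?_ (ha _ (by simp; omega)) (ha _ (by simp; omega))
  rcases n with _ | n
  · exact le_rfl
  · exact (ha _ (by simp; omega)).le

theorem exists_hitsZeroAt {N : ℕ} (hN : 1 ≤ N) : ∃ a, HitsZeroAt N a := by
  set s := sInf (miwPosSet N)
  have hs : s ∈ closure (miwPosSet N) :=
    csInf_mem_closure (miwPosSet_nonempty N) (bddBelow_miwPosSet hN)
  have limit_le {k : ℕ} (hk : ∀ j, 1 ≤ j → j < k → miwSum s j ≠ 0) {c : ℝ} {g : ℝ → ℝ}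
      (hg : Continuous g) (h : ∀ a ∈ miwPosSet N, c ≤ g (miwSum a k)) : c ≤ g (miwSum s k) :=
    ContinuousWithinAt.closure_le hs continuousWithinAt_const
      (hg.continuousAt.comp (continuousAt_miwSum k hk)).continuousWithinAt h
  have hpos : ∀ k, 1 ≤ k → k < N → 0 < miwSum s k := by
    intro k
    induction k using Nat.strong_induction_on with
    | _ k ih =>
      intro hk hkN
      have hprev : ∀ j, 1 ≤ j → j < k → miwSum s j ≠ 0 := fun j hj hjk =>
        (ih j hjk hj (by omega)).ne'
      have hnn : 0 ≤ miwSum s k :=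
        limit_le hprev continuous_id fun a ha => (ha k (by simp; omega)).le
      have hsq : 1 ≤ 2 * miwSum s k ^ 2 := limit_le hprev (g := fun t => 2 * t ^ 2) (by fun_prop)
        fun a ha => (one_lt_two_mul_miwSum_sq_of_mem ha hk hkN).le
      refine hnn.lt_of_ne fun h0 => ?_
      rw [← h0] at hsq
      norm_num at hsq
  have hnn : 0 ≤ miwSum s N :=
    limit_le (fun j hj hjN => (hpos j hj hjN).ne') continuous_id fun a ha =>
      (ha N (by simp [hN])).le
  refine ⟨s, hpos, le_antisymm ?_ hnn⟩
  by_contra! hN0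
  refine sInf_miwPosSet_notMem hN fun k hk => ?_
  rw [Finset.mem_Icc] at hk
  rcases hk.2.lt_or_eq with hkN | rfl
  · exact hpos k hk.1 hkN
  · exact hN0

theorem zeroMedian_sub_pred {N : ℕ} {S : ℕ → ℝ} (hN : 1 ≤ N) (hS : ∀ n ≤ N, S (N - n) = S n) :
    ZeroMedian N fun n => S n - S (n - 1) := by
  unfold ZeroMedian
  split_ifs with hpar
  · have h := hS ((N + 1) / 2 - 1) (by omega)
    rw [show N - ((N + 1) / 2 - 1) = (N + 1) / 2 by omega] at h
    linarith
  · have h := hS (N / 2 + 1) (by omega)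
    rw [show N - (N / 2 + 1) = N / 2 - 1 by omega] at h
    simp only [Nat.add_sub_cancel]
    linarith

theorem IsMIW.hitsZeroAt {N : ℕ} {y : ℕ → ℝ} (hy : IsMIW N y) (h0 : Ssum y N = 0)
    (hdec : ∀ n, 1 ≤ n → n < N → y (n + 1) < y n) : HitsZeroAt N (y 1) := by
  refine ⟨fun k hk hkN => ?_, ?_⟩
  · rw [← hy.Ssum_eq_miwSum hkN.le]
    exact (hy.lt_iff hk hkN).1 (hdec k hk hkN)
  · rw [← hy.Ssum_eq_miwSum le_rfl, h0]

/-- There exists a unique (on indices `1, …, N`) solution of the MIW recursion which has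
zero mean `x_1 + ⋯ + x_N = 0` and is strictly decreasing `x_1 > ⋯ > x_N`;
moreover, this solution is zero-median. -/
theorem exists_unique_strictDecreasing_zeroMean_solution (N : ℕ) (hN : 2 ≤ N) :
    ∃ x : ℕ → ℝ,
      (IsMIW N x ∧ (∑ i ∈ Finset.Icc 1 N, x i) = 0 ∧
        (∀ n, 1 ≤ n → n < N → x (n + 1) < x n)) ∧
      ZeroMedian N x ∧
      (∀ y : ℕ → ℝ, IsMIW N y → (∑ i ∈ Finset.Icc 1 N, y i) = 0 →
        (∀ n, 1 ≤ n → n < N → y (n + 1) < y n) →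
        ∀ n, 1 ≤ n → n ≤ N → y n = x n) := by
  obtain ⟨s, hs⟩ := exists_hitsZeroAt (by omega : 1 ≤ N)
  have hSsum := Ssum_sub_pred (S := miwSum s) rfl
  have hx := (isMIWPartialSums_miwSum N s).isMIW fun k hk hkN => (hs.1 k hk hkN).ne'
  refine ⟨_, ⟨hx, (hSsum N).trans hs.2, fun n hn hnN => (hx.lt_iff hn hnN).2 ?_⟩,
    zeroMedian_sub_pred (by omega) fun n hn => hs.miwSum_sub (by omega) hn, ?_⟩
  · rw [hSsum]
    exact hs.1 n hn hnN
  intro y hy hy0 hydec n hn hnN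
  have hy1 : y 1 = s := (hy.hitsZeroAt hy0 hydec).unique hs (by omega)
  rw [← Ssum_sub_Ssum_pred y hn, hy.Ssum_eq_miwSum hnN, hy.Ssum_eq_miwSum (by omega), hy1]
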